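/- arXiv:1903.00819 — 5 statements merged into one kernel-verified Lean document; each statement's English description precedes it below -/
import Mathlib

section
/- Let t ∈ [−1,1], let m be a positive integer, and let 0 < x_1 < x_2 < ⋯ < x_m < 1. Then the determinant of the m×m real matrix whose (i,j) entry is K_t(x_i,x_j) = min{x_i,x_j} − t·x_i·x_j equals x_1·(1 − t·x_m)·∏_{i=2}^m (x_i − x_{i−1}). -/
/-!
Writing `A` for the matrix `min (x i) (x j)`, the last column of `A` is `x` itself, so the kernel
matrix is `A - t • x xᵀ = A * (1 - t • e_last xᵀ)`, and the rank-one factor has determinant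
`1 - t * x_last`. Subtracting from each row of `A` the previous one leaves an upper triangular
matrix with diagonal `x 0, x 1 - x 0, …, x m - x (m - 1)`.
-/

namespace Matrix

variable {n R : Type*} [Fintype n] [DecidableEq n] [CommRing R]

theorem det_one_sub_vecMulVec (u v : n → R) : (1 - vecMulVec u v).det = 1 - v ⬝ᵥ u := by
  rw [vecMulVec_eq Unit, det_one_sub_mul_comm, det_unique, sub_apply, one_apply_eq,
    replicateRow_mul_replicateCol_apply]

theorem det_sub_vecMulVec_col (A : Matrix n n R) (k : n) (v : n → R) :
    (A - vecMulVec (A.col k) v).det = A.det * (1 - v k) := by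
  have hfactor : A - vecMulVec (A.col k) v = A * (1 - vecMulVec (Pi.single k 1) v) := by
    rw [Matrix.mul_sub, Matrix.mul_one, mul_vecMulVec, mulVec_single_one]
  rw [hfactor, det_mul, det_one_sub_vecMulVec, dotProduct_single, mul_one]

theorem det_min_of_monotone [LinearOrder R] {m : ℕ} {x : Fin (m + 1) → R} (hx : Monotone x) :
    (of fun i j => min (x i) (x j)).det = x 0 * ∏ i : Fin m, (x i.succ - x i.castSucc) := by
  let B : Matrix (Fin (m + 1)) (Fin (m + 1)) R := of <|
    Fin.cases (fun _ => x 0) fun i j => if j ≤ i.castSucc then 0 else x i.succ - x i.castSucc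
  have hB : B.IsUpperTriangular := by
    intro i j hji
    induction i using Fin.cases with
    | zero => exact absurd hji (Fin.not_lt_zero j)
    | succ i => exact if_pos (Fin.le_castSucc_iff.mpr hji)
  rw [det_eq_of_forall_row_eq_smul_add_pred (B := B) (fun _ => 1), det_of_isUpperTriangular hB,
    Fin.prod_univ_succ]
  · simp [B]
  · intro j
    simp [B, hx (Fin.zero_le j)]
  · intro i j
    by_cases hj : j ≤ i.castSucc
    · have hxj : x j ≤ x i.castSucc := hx hj
      have hxi : x i.castSucc ≤ x i.succ := hx (Fin.castSucc_le_succ i)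
      simp [B, hj, min_eq_right hxj, min_eq_right (hxj.trans hxi)]
    · have hij : i.succ ≤ j := Fin.castSucc_lt_iff_succ_le.mp (not_le.mp hj)
      have hxj : x i.succ ≤ x j := hx hij
      have hxi : x i.castSucc ≤ x j := hx ((Fin.castSucc_le_succ i).trans hij)
      simp [B, hj, min_eq_left hxj, min_eq_left hxi]

end Matrix

open Matrix

theorem det_Kt_matrix_general (t : ℝ) (m : ℕ) (x : Fin (m + 1) → ℝ)
    (hmono : StrictMono x) :
    (Matrix.of fun i j : Fin (m + 1) => min (x i) (x j) - t * (x i * x j)).det =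
      x 0 * (1 - t * x (Fin.last m)) * ∏ i : Fin m, (x i.succ - x i.castSucc) := by
  set A : Matrix (Fin (m + 1)) (Fin (m + 1)) ℝ := of fun i j => min (x i) (x j)
  have hK : (of fun i j => min (x i) (x j) - t * (x i * x j)) =
      A - vecMulVec (A.col (Fin.last m)) (t • x) := by
    ext i j
    simp [A, vecMulVec_apply, min_eq_left (hmono.monotone (Fin.le_last i))]
  rw [hK, det_sub_vecMulVec_col, det_min_of_monotone hmono.monotone, Pi.smul_apply, smul_eq_mul]
  ring

/-- For `t ∈ [-1,1]` and `0 < x₀ < x₁ < ⋯ < x_m < 1`, the determinant of the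
matrix with entries `K_t(x_i,x_j) = min{x_i,x_j} - t·x_i·x_j` equals
`x₀·(1 - t·x_m)·∏ (x_{i+1} - x_i)`. -/
theorem det_Kt_matrix (t : ℝ) (ht : t ∈ Set.Icc (-1 : ℝ) 1) (m : ℕ) (x : Fin (m + 1) → ℝ)
    (hmono : StrictMono x) (h0 : 0 < x 0) (h1 : x (Fin.last m) < 1) :
    (Matrix.of fun i j : Fin (m + 1) => min (x i) (x j) - t * (x i * x j)).det =
      x 0 * (1 - t * x (Fin.last m)) * ∏ i : Fin m, (x i.succ - x i.castSucc) :=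
  det_Kt_matrix_general t m x hmono
end

section
/- For every t ∈ [−1,1] and every finite family of pairwise distinct points x_1,…,x_m ∈ (0,1), the real symmetric m×m matrix [K_t(x_i,x_j)]_{i,j=1}^m is positive definite (that is, for every nonzero c ∈ ℝ^m one has ∑_{i,j} c_i c_j K_t(x_i,x_j) > 0); in particular this matrix is invertible. -/
/-!
With `0 < y₀ < ⋯ < yₘ₋₁` and `y₋₁ = 0`, one has `min yᵢ yⱼ = ∑_{k ≤ i, j} (y_k - y_{k-1})`,
so the min kernel is `Bᵀ D B` with `B` unitriangular and `D` a positive diagonal: it is positive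
definite at distinct positive points. The Brownian bridge is a time change of Brownian motion,
`min x y - x y = (1 - x)(1 - y) min (φ x) (φ y)` with `φ x = x / (1 - x)`, so `K₁` is positive
definite on distinct points of `(0, 1)`; finally `K_t = K₁ + (1 - t) x xᵀ` adds a positive
semidefinite term when `t ≤ 1`.
-/

open Finset

namespace Matrix

theorem posDef_min_of_strictMono {m : ℕ} {y : Fin m → ℝ} (hy : StrictMono y)
    (hy₀ : ∀ i, 0 < y i) : (of fun i j ↦ min (y i) (y j)).PosDef := by
  set z : Fin (m + 1) → ℝ := Fin.cons 0 y
  set B : Matrix (Fin m) (Fin m) ℝ := of fun k i ↦ if k ≤ i then 1 else 0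
  have hz : ∀ k : Fin m, z k.castSucc < z k.succ := by
    intro k
    obtain ⟨n, rfl⟩ := Nat.exists_eq_add_one_of_ne_zero k.pos.ne'
    cases k using Fin.cases with
    | zero => simpa [z] using hy₀ 0
    | succ k => simpa [z, ← Fin.succ_castSucc] using hy (Fin.castSucc_lt_succ (i := k))
  have hB : Function.Injective B.mulVec := by
    rw [mulVec_injective_iff_isUnit, isUnit_iff_isUnit_det, det_of_isUpperTriangular]
    · simp [B]
    · intro i j hij
      simpa [B] using hij
  have hfac : of (fun i j ↦ min (y i) (y j))
      = Bᴴ * diagonal (fun k ↦ z k.succ - z k.castSucc) * B := by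
    ext i j
    have hentry : ∀ k, (if k ≤ i then (1 : ℝ) else 0) * (z k.succ - z k.castSucc) *
        (if k ≤ j then 1 else 0) = if k ≤ min i j then z k.succ - z k.castSucc else 0 := by
      intro k
      simp only [le_min_iff]
      split_ifs <;> simp_all
    rw [mul_apply]
    simp only [mul_diagonal, conjTranspose_apply, star_trivial, B, of_apply, hentry]
    rw [sum_ite, sum_const_zero, add_zero, filter_ge_eq_Iic, Fin.sum_Iic_sub]
    simp [z, hy.monotone.map_min]
  rw [hfac]
  exact (PosDef.diagonal fun k ↦ sub_pos.2 (hz k)).conjTranspose_mul_mul_same hB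

theorem posDef_min_of_injective {ι : Type*} [Fintype ι] {x : ι → ℝ}
    (hx : Function.Injective x) (hx₀ : ∀ i, 0 < x i) :
    (of fun i j ↦ min (x i) (x j)).PosDef := by
  set e := Fintype.equivFin ι
  set σ := Tuple.sort (x ∘ e.symm)
  have hmono : StrictMono ((x ∘ e.symm) ∘ σ) :=
    (Tuple.monotone_sort _).strictMono_of_injective (hx.comp (e.symm.injective.comp σ.injective))
  convert (posDef_min_of_strictMono hmono fun _ ↦ hx₀ _).submatrix
    (σ.symm.injective.comp e.injective) using 1
  ext i j
  simp

theorem min_sub_mul_eq_mul_min_div {x y : ℝ} (hx : x < 1) (hy : y < 1) :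
    min x y - x * y = (1 - x) * (1 - y) * min (x / (1 - x)) (y / (1 - y)) := by
  have h₁ : 0 < 1 - x := by linarith
  have h₂ : 0 < 1 - y := by linarith
  rcases le_total x y with h | h
  · rw [min_eq_left h, min_eq_left ((div_le_div_iff₀ h₁ h₂).2 (by nlinarith))]
    field_simp
  · rw [min_eq_right h, min_eq_right ((div_le_div_iff₀ h₂ h₁).2 (by nlinarith))]
    field_simp

theorem posDef_min_sub_mul_of_injective {ι : Type*} [Fintype ι] {x : ι → ℝ}
    (hx : Function.Injective x) (hx₀₁ : ∀ i, x i ∈ Set.Ioo 0 1) :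
    (of fun i j ↦ min (x i) (x j) - x i * x j).PosDef := by
  classical
  set D : Matrix ι ι ℝ := diagonal fun i ↦ 1 - x i
  have hD : Function.Injective D.mulVec := by
    rw [mulVec_injective_iff_isUnit, isUnit_diagonal]
    exact Pi.isUnit_iff.2 fun i ↦ (sub_pos.2 (hx₀₁ i).2).ne'.isUnit
  have hφ : Function.Injective fun i ↦ x i / (1 - x i) := by
    intro i j hij
    have h₁ := sub_pos.2 (hx₀₁ i).2
    have h₂ := sub_pos.2 (hx₀₁ j).2
    rw [div_eq_div_iff h₁.ne' h₂.ne'] at hij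
    exact hx (by linarith)
  have hfac : of (fun i j ↦ min (x i) (x j) - x i * x j)
      = Dᴴ * (of fun i j ↦ min (x i / (1 - x i)) (x j / (1 - x j))) * D := by
    ext i j
    simp only [of_apply, min_sub_mul_eq_mul_min_div (hx₀₁ i).2 (hx₀₁ j).2,
      conjTranspose_eq_transpose_of_trivial, diagonal_transpose, mul_diagonal, diagonal_mul, D]
    ring
  rw [hfac]
  exact (posDef_min_of_injective hφ fun i ↦
    div_pos (hx₀₁ i).1 (sub_pos.2 (hx₀₁ i).2)).conjTranspose_mul_mul_same hD

theorem posDef_min_sub_mul_mul_of_injective {ι : Type*} [Fintype ι] {t : ℝ} (ht : t ≤ 1)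
    {x : ι → ℝ} (hx : Function.Injective x) (hx₀₁ : ∀ i, x i ∈ Set.Ioo 0 1) :
    (of fun i j ↦ min (x i) (x j) - t * (x i * x j)).PosDef := by
  have hsplit : of (fun i j ↦ min (x i) (x j) - t * (x i * x j))
      = of (fun i j ↦ min (x i) (x j) - x i * x j) + (1 - t) • vecMulVec x (star x) := by
    ext i j
    simp only [of_apply, star_trivial, add_apply, smul_apply, vecMulVec_apply, smul_eq_mul]
    ring
  rw [hsplit]
  exact (posDef_min_sub_mul_of_injective hx hx₀₁).add_posSemidef
    ((posSemidef_vecMulVec_self_star x).smul (sub_nonneg.2 ht))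

end Matrix

/-- For `t ∈ [-1,1]` and pairwise distinct `x₁,…,x_m ∈ (0,1)`, the matrix
`[K_t(x_i,x_j)]` with `K_t(x,y) = min{x,y} - t·x·y` is positive definite (the quadratic form
is positive on nonzero vectors), and in particular invertible. -/
theorem Kt_matrix_posDef (t : ℝ) (ht : t ∈ Set.Icc (-1 : ℝ) 1) (m : ℕ) (x : Fin m → ℝ)
    (hx : ∀ i, x i ∈ Set.Ioo (0 : ℝ) 1) (hinj : Function.Injective x) :
    (∀ c : Fin m → ℝ, c ≠ 0 →
        0 < ∑ i, ∑ j, c i * c j * (min (x i) (x j) - t * (x i * x j))) ∧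
      IsUnit (Matrix.of fun i j : Fin m => min (x i) (x j) - t * (x i * x j)) := by
  have hK := Matrix.posDef_min_sub_mul_mul_of_injective ht.2 hinj hx
  refine ⟨fun c hc ↦ ?_, hK.isUnit⟩
  refine (hK.dotProduct_mulVec_pos hc).trans_eq ?_
  simp only [dotProduct, Matrix.mulVec, Matrix.of_apply, star_trivial, Finset.mul_sum]
  exact Finset.sum_congr rfl fun i _ ↦ Finset.sum_congr rfl fun j _ ↦ by ring
end

section
/- Let t ∈ [−1,1], let (x_i)_{i∈ℕ} be a sequence of pairwise distinct points in (0,1), and let (c_i)_{i∈ℕ} be complex numbers with ∑_{i∈ℕ} |c_i| < ∞. If ∑_{i∈ℕ} K_t(x_i,x)·c_i = 0 for every x ∈ (0,1), then c_i = 0 for every i ∈ ℕ. -/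
/-!
Taking the second difference in `y` with step `h` at a node `x j` kills the linear part
`t x y` of the kernel and turns `min (x i) y` into the tent `-(h - |x i - x j|)⁺`, so the
hypothesis gives `∑ (h - |x i - x j|)⁺ c i = 0` for all small `h > 0`. Divided by `h`, the
tents converge pointwise to the indicator of `i = j` (the nodes are distinct) and are
dominated by `|c i|`, so the sums tend to `c j`, which is therefore `0`.
-/

open Filter Topology Set

lemma min_add_min_sub_two_mul_min {a p h : ℝ} (hh : 0 ≤ h) :
    min a (p + h) + min a (p - h) - 2 * min a p = -max 0 (h - |a - p|) := by
  simp only [min_def, max_def, abs_eq_max_neg]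
  split_ifs <;> linarith

lemma min_sub_mul_second_difference (t a p : ℝ) {h : ℝ} (hh : 0 ≤ h) :
    (min a (p + h) - t * (a * (p + h))) + (min a (p - h) - t * (a * (p - h)))
      - 2 * (min a p - t * (a * p)) = -max 0 (h - |a - p|) := by
  linear_combination min_add_min_sub_two_mul_min (a := a) (p := p) hh

lemma abs_min_sub_mul_mul_le {t a y : ℝ} (ha : a ∈ Ioo 0 1) (hy : y ∈ Ioo 0 1) :
    |min a y - t * (a * y)| ≤ 1 + |t| := by
  have hmin : |min a y| ≤ 1 := by
    rw [abs_of_pos (lt_min ha.1 hy.1)]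
    exact (min_le_left _ _).trans ha.2.le
  have hay : |a * y| ≤ 1 := by
    rw [abs_of_pos (mul_pos ha.1 hy.1)]
    nlinarith [ha.1, ha.2, hy.1, hy.2]
  calc |min a y - t * (a * y)| ≤ |min a y| + |t| * |a * y| := by
        rw [← abs_mul]; exact abs_sub _ _
    _ ≤ 1 + |t| * 1 := by gcongr
    _ = 1 + |t| := by ring

lemma summable_ofReal_mul_of_abs_le {ι : Type*} {f : ι → ℝ} {c : ι → ℂ} {C : ℝ}
    (hf : ∀ i, |f i| ≤ C) (hc : Summable fun i => ‖c i‖) :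
    Summable fun i => (f i : ℂ) * c i :=
  Summable.of_norm_bounded (hc.mul_left C) fun i => by
    rw [norm_mul, Complex.norm_real, Real.norm_eq_abs]
    exact mul_le_mul_of_nonneg_right (hf i) (norm_nonneg _)

lemma abs_max_zero_sub_div_le_one {d h : ℝ} (hd : 0 ≤ d) (hh : 0 < h) :
    |max 0 (h - d) / h| ≤ 1 := by
  rw [abs_of_nonneg (by positivity), div_le_one hh]
  exact max_le hh.le (by linarith)

lemma tendsto_max_zero_sub_div_nhdsGT {d : ℝ} (hd : 0 ≤ d) :
    Tendsto (fun h => max 0 (h - d) / h) (𝓝[>] 0) (𝓝 (if d = 0 then 1 else 0)) := by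
  split_ifs with hd0
  · refine tendsto_const_nhds.congr' ?_
    filter_upwards [self_mem_nhdsWithin] with h (hh : 0 < h)
    rw [hd0, sub_zero, max_eq_right hh.le, div_self hh.ne']
  · refine tendsto_const_nhds.congr' ?_
    filter_upwards [Ioo_mem_nhdsGT (lt_of_le_of_ne hd (Ne.symm hd0))] with h hh
    rw [max_eq_left (by linarith [hh.2]), zero_div]

theorem eq_zero_of_tsum_max_zero_sub_abs_mul_eq_zero {ι : Type*} {x : ι → ℝ}
    (hinj : Function.Injective x) {c : ι → ℂ} (hc : Summable fun i => ‖c i‖) (j : ι)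
    (htent : ∀ᶠ h in 𝓝[>] 0, ∑' i, ((max 0 (h - |x i - x j|) : ℝ) : ℂ) * c i = 0) :
    c j = 0 := by
  classical
  set f : ℝ → ι → ℂ := fun h i => ((max 0 (h - |x i - x j|) / h : ℝ) : ℂ) * c i
  have hlim : ∀ i, Tendsto (f · i) (𝓝[>] 0) (𝓝 (if i = j then c j else 0)) := by
    intro i
    have hval : (if i = j then c j else 0) =
        ((if |x i - x j| = 0 then 1 else 0 : ℝ) : ℂ) * c i := by
      by_cases hij : i = j <;> simp [hij, sub_eq_zero, hinj.eq_iff]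
    rw [hval]
    exact ((Complex.continuous_ofReal.tendsto _).comp
      (tendsto_max_zero_sub_div_nhdsGT (abs_nonneg _))).mul_const (c i)
  have hbound : ∀ᶠ h in 𝓝[>] 0, ∀ i, ‖f h i‖ ≤ ‖c i‖ := by
    filter_upwards [self_mem_nhdsWithin] with h (hh : 0 < h) i
    rw [norm_mul, Complex.norm_real, Real.norm_eq_abs]
    exact mul_le_of_le_one_left (norm_nonneg _) (abs_max_zero_sub_div_le_one (abs_nonneg _) hh)
  have hsum := tendsto_tsum_of_dominated_convergence hc hlim hbound
  rw [tsum_ite_eq] at hsum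
  refine tendsto_nhds_unique hsum (tendsto_const_nhds.congr' ?_)
  filter_upwards [htent] with h hh
  simp only [f, Complex.ofReal_div, div_mul_eq_mul_div, tsum_div_const, hh, zero_div]

theorem Kt_A3_general (t : ℝ) (x : ℕ → ℝ)
    (hx : ∀ i, x i ∈ Set.Ioo (0 : ℝ) 1) (hinj : Function.Injective x)
    (c : ℕ → ℂ) (hc : Summable fun i => ‖c i‖)
    (hzero : ∀ y ∈ Set.Ioo (0 : ℝ) 1,
      ∑' i : ℕ, ((min (x i) y - t * (x i * y) : ℝ) : ℂ) * c i = 0) :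
    ∀ i, c i = 0 := by
  set K : ℝ → ℕ → ℂ := fun y i => ((min (x i) y - t * (x i * y) : ℝ) : ℂ) * c i
  have hsum : ∀ y ∈ Ioo (0 : ℝ) 1, Summable (K y) := fun y hy =>
    summable_ofReal_mul_of_abs_le (fun i => abs_min_sub_mul_mul_le (hx i) hy) hc
  intro j
  refine eq_zero_of_tsum_max_zero_sub_abs_mul_eq_zero hinj hc j ?_
  filter_upwards [Ioo_mem_nhdsGT (lt_min (hx j).1 (sub_pos.2 (hx j).2))] with h ⟨hh, hlt⟩
  have hplus : x j + h ∈ Ioo 0 1 := by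
    constructor <;> linarith [(hx j).1, min_le_right (x j) (1 - x j)]
  have hminus : x j - h ∈ Ioo 0 1 := by
    constructor <;> linarith [(hx j).2, min_le_left (x j) (1 - x j)]
  calc ∑' i, ((max 0 (h - |x i - x j|) : ℝ) : ℂ) * c i
      = ∑' i, -(K (x j + h) i + K (x j - h) i - 2 * K (x j) i) := by
        congr 1; ext i
        rw [← neg_neg (max _ _), ← min_sub_mul_second_difference t (x i) (x j) hh.le]
        simp only [K]; push_cast; ring
    _ = -(∑' i, K (x j + h) i + ∑' i, K (x j - h) i - 2 * ∑' i, K (x j) i) := by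
        rw [tsum_neg, Summable.tsum_sub ((hsum _ hplus).add (hsum _ hminus))
          ((hsum _ (hx j)).mul_left 2), (hsum _ hplus).tsum_add (hsum _ hminus), tsum_mul_left]
    _ = 0 := by simp only [K, hzero _ hplus, hzero _ hminus, hzero _ (hx j)]; ring

/-- assumption (A3′) for the kernel `K_t(x,y) = min{x,y} - t·x·y` on `(0,1)`:
if `(x_i)` are pairwise distinct points of `(0,1)`, `(c_i)` are complex numbers with
`∑ |c_i| < ∞`, and `∑_i K_t(x_i,y)·c_i = 0` for all `y ∈ (0,1)`, then all `c_i = 0`. -/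
theorem Kt_A3 (t : ℝ) (ht : t ∈ Set.Icc (-1 : ℝ) 1) (x : ℕ → ℝ)
    (hx : ∀ i, x i ∈ Set.Ioo (0 : ℝ) 1) (hinj : Function.Injective x)
    (c : ℕ → ℂ) (hc : Summable fun i => ‖c i‖)
    (hzero : ∀ y ∈ Set.Ioo (0 : ℝ) 1,
      ∑' i : ℕ, ((min (x i) y - t * (x i * y) : ℝ) : ℂ) * c i = 0) :
    ∀ i, c i = 0 :=
  Kt_A3_general t x hx hinj c hc hzero
end

section
/- Let x_1,…,x_m ∈ (0,1) be pairwise distinct. Then the m×m real matrix [K_w(x_i,x_j)]_{i,j=1}^m is invertible, and for every x ∈ (0,1) the unique solution b ∈ ℝ^m of the linear system ∑_{j=1}^m K_w(x_i,x_j)·b_j = K_w(x,x_i) for all i ∈ {1,…,m} satisfies ∑_{i=1}^m |b_i| ≤ 1. -/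
/-!
The matrix `[1 - |xᵢ - xⱼ|]` has trivial kernel: if `c` lies in it, the piecewise affine
function `s ↦ ∑ⱼ cⱼ (1 - |s - xⱼ|)` vanishes at every node, and comparing it at the two extreme
nodes and at each pair of consecutive nodes forces all sums `∑_{xⱼ ≤ xₐ} cⱼ` to vanish, hence
`c = 0`. For the bound it then suffices to exhibit one solution of `ℓ¹`-norm at most `1`, and
one supported on at most two nodes works: if `y` lies between two consecutive nodes, the
`1 - |· - xᵢ|` are affine there and `b` is a convex combination of the two unit vectors; if
`y` lies to the left of all nodes, every `1 - |y - xᵢ|` is affine in `xᵢ`, and an explicit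
combination of the extreme nodes reproduces it; the right side follows by the reflection
`s ↦ 1 - s`.
-/

open Finset Function Matrix

variable {ι : Type*}

/-- `K[x]` for `K_w`; the `max` with `0` in `K_w` is inactive for nodes in `[0, 1]`. -/
def wendlandMatrix (x : ι → ℝ) : Matrix ι ι ℝ := Matrix.of fun i j => 1 - |x i - x j|

/-- `K_x(y) = (K_w(y, xᵢ))ᵢ`. -/
def wendlandVec (x : ι → ℝ) (y : ℝ) : ι → ℝ := fun i => 1 - |y - x i|

lemma one_sub_abs_sub_nonneg {s t : ℝ} (hs : s ∈ Set.Icc (0 : ℝ) 1) (ht : t ∈ Set.Icc (0 : ℝ) 1) :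
    0 ≤ 1 - |s - t| :=
  sub_nonneg.2 <| abs_sub_le_iff.2 ⟨by linarith [hs.2, ht.1], by linarith [hs.1, ht.2]⟩

lemma wendlandMatrix_one_sub (x : ι → ℝ) :
    wendlandMatrix (fun i => 1 - x i) = wendlandMatrix x := by
  ext i j
  simp only [wendlandMatrix, of_apply, sub_sub_sub_cancel_left, abs_sub_comm]

lemma wendlandVec_one_sub (x : ι → ℝ) (y : ℝ) :
    wendlandVec (fun i => 1 - x i) (1 - y) = wendlandVec x y := by
  ext i
  simp only [wendlandVec, sub_sub_sub_cancel_left, abs_sub_comm]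

variable [Fintype ι]

lemma wendlandMatrix_mulVec_apply (x : ι → ℝ) (c : ι → ℝ) (i : ι) :
    (wendlandMatrix x *ᵥ c) i = ∑ j, (1 - |x i - x j|) * c j := rfl

theorem eq_zero_of_forall_sum_filter_le_eq_zero {α M : Type*} [LinearOrder α] [AddCommGroup M]
    {x : ι → α} (hx : Injective x) {c : ι → M}
    (h : ∀ a, ∑ j with x j ≤ x a, c j = 0) : c = 0 := by
  classical
  by_contra hc
  obtain ⟨a, ha, hmin⟩ := (univ.filter fun j => c j ≠ 0).exists_min_image x
    (by simpa [Finset.Nonempty, funext_iff] using hc)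
  refine (mem_filter.1 ha).2 ?_
  rw [← h a, sum_eq_single_of_mem a (by simp)]
  intro j hj hja
  by_contra hcj
  have := hmin j (by simpa using hcj)
  exact hja (hx (le_antisymm (mem_filter.1 hj).2 this))

section Injectivity

variable {x : ι → ℝ} (hx : ∀ i, x i ∈ Set.Icc (0 : ℝ) 1) {c : ι → ℝ}
  (hc : wendlandMatrix x *ᵥ c = 0)
include hx hc

lemma sum_eq_zero_of_wendlandMatrix_mulVec_eq_zero : ∑ j, c j = 0 := by
  cases isEmpty_or_nonempty ι
  · simp
  obtain ⟨F, hF⟩ := Finite.exists_min x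
  obtain ⟨L, hL⟩ := Finite.exists_max x
  have hd : 0 < 2 - (x L - x F) := by linarith [(hx L).2, (hx F).1]
  have : (2 - (x L - x F)) * ∑ j, c j = 0 := calc
    _ = ∑ j, ((1 - |x F - x j|) * c j + (1 - |x L - x j|) * c j) := by
      rw [mul_sum]
      refine sum_congr rfl fun j _ => ?_
      rw [abs_sub_comm, abs_of_nonneg (sub_nonneg.2 (hF j)), abs_of_nonneg (sub_nonneg.2 (hL j))]
      ring
    _ = 0 := by
      rw [sum_add_distrib, ← wendlandMatrix_mulVec_apply, ← wendlandMatrix_mulVec_apply, hc]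
      simp
  exact (mul_eq_zero.1 this).resolve_left hd.ne'

lemma sum_filter_le_eq_zero_of_wendlandMatrix_mulVec_eq_zero (a : ι) :
    ∑ j with x j ≤ x a, c j = 0 := by
  have htotal := sum_eq_zero_of_wendlandMatrix_mulVec_eq_zero hx hc
  by_cases htop : ∀ j, x j ≤ x a
  · rwa [filter_true_of_mem fun j _ => htop j]
  push Not at htop
  obtain ⟨a', ha', hnext⟩ := (univ.filter fun j => x a < x j).exists_min_image x
    (by simpa [Finset.Nonempty] using htop)
  have hδ : 0 < x a' - x a := sub_pos.2 (mem_filter.1 ha').2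
  -- consecutive rows differ by `±(x a' - x a) * c j`, the sign telling on which side `x j` is
  have hstep : (x a' - x a) * (∑ j with x j ≤ x a, c j - ∑ j with ¬x j ≤ x a, c j) = 0 := calc
    _ = ∑ j, if x j ≤ x a then (x a' - x a) * c j else -((x a' - x a) * c j) := by
      rw [sum_ite, sum_neg_distrib, mul_sub, mul_sum, mul_sum, sub_eq_add_neg]
    _ = ∑ j, ((1 - |x a - x j|) * c j - (1 - |x a' - x j|) * c j) := by
      refine sum_congr rfl fun j _ => ?_
      split_ifs with hj
      · rw [abs_of_nonneg (by linarith), abs_of_nonneg (by linarith)]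
        ring
      · have : x a' ≤ x j := hnext j (by simpa using hj)
        rw [abs_of_nonpos (by linarith), abs_of_nonpos (by linarith)]
        ring
    _ = 0 := by
      rw [sum_sub_distrib, ← wendlandMatrix_mulVec_apply, ← wendlandMatrix_mulVec_apply, hc]
      simp
  have hsplit := sum_filter_add_sum_filter_not univ (fun j => x j ≤ x a) c
  rcases mul_eq_zero.1 hstep with h | h
  · exact absurd h hδ.ne'
  · linarith

end Injectivity

theorem isUnit_wendlandMatrix [DecidableEq ι] {x : ι → ℝ} (hx : ∀ i, x i ∈ Set.Icc (0 : ℝ) 1)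
    (hinj : Injective x) : IsUnit (wendlandMatrix x) := by
  refine mulVec_injective_iff_isUnit.1 fun u v huv => sub_eq_zero.1 ?_
  have hker : wendlandMatrix x *ᵥ (u - v) = 0 := by rw [mulVec_sub, huv, sub_self]
  exact eq_zero_of_forall_sum_filter_le_eq_zero hinj
    (sum_filter_le_eq_zero_of_wendlandMatrix_mulVec_eq_zero hx hker)

lemma sum_abs_single_add_single_le [DecidableEq ι] (p q : ι) (α β : ℝ) :
    ∑ i, |Pi.single p α i + Pi.single q β i| ≤ |α| + |β| := calc
  _ ≤ ∑ i, (|Pi.single p α i| + |Pi.single q β i|) := sum_le_sum fun i _ => abs_add_le _ _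
  _ = |α| + |β| := by
    simp only [sum_add_distrib, Pi.single_apply, apply_ite abs, abs_zero, sum_ite_eq', mem_univ,
      if_true]

section Existence

variable {x : ι → ℝ} {y : ℝ}

lemma exists_solution_of_two_nodes (p q : ι) (α β : ℝ) (hαβ : |α| + |β| ≤ 1)
    (h : ∀ i, α * (1 - |x i - x p|) + β * (1 - |x i - x q|) = 1 - |y - x i|) :
    ∃ b, wendlandMatrix x *ᵥ b = wendlandVec x y ∧ ∑ i, |b i| ≤ 1 := by
  classical
  refine ⟨Pi.single p α + Pi.single q β, ?_, (sum_abs_single_add_single_le p q α β).trans hαβ⟩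
  ext i
  simp [mulVec_add, wendlandMatrix, wendlandVec, ← h i]

lemma exists_solution_of_exists_le_of_exists_lt (hle : ∃ i, x i ≤ y) (hlt : ∃ i, y < x i) :
    ∃ b, wendlandMatrix x *ᵥ b = wendlandVec x y ∧ ∑ i, |b i| ≤ 1 := by
  obtain ⟨k, hk, hkmax⟩ := (univ.filter fun i => x i ≤ y).exists_max_image x
    (by simpa [Finset.Nonempty] using hle)
  obtain ⟨k', hk', hkmin⟩ := (univ.filter fun i => y < x i).exists_min_image x
    (by simpa [Finset.Nonempty] using hlt)
  simp only [mem_filter, mem_univ, true_and] at hk hk' hkmax hkmin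
  have hh : 0 < x k' - x k := by linarith
  set lam := (x k' - y) / (x k' - x k)
  have hlam : lam * (x k' - x k) = x k' - y := div_mul_cancel₀ _ hh.ne'
  have hlam0 : 0 ≤ lam := div_nonneg (by linarith) hh.le
  have hlam1 : lam ≤ 1 := (div_le_one hh).2 (by linarith)
  refine exists_solution_of_two_nodes k k' lam (1 - lam) ?_ fun i => ?_
  · rw [abs_of_nonneg hlam0, abs_of_nonneg (by linarith)]
    linarith
  -- no node lies strictly between `x k` and `x k'`, where the kernel sections are affine
  rcases le_or_gt (x i) y with hi | hi
  · have := hkmax i hi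
    rw [abs_of_nonpos (by linarith), abs_of_nonpos (by linarith), abs_of_nonneg (by linarith)]
    linear_combination hlam
  · have := hkmin i hi
    rw [abs_of_nonneg (by linarith), abs_of_nonneg (by linarith), abs_of_nonpos (by linarith)]
    linear_combination -hlam

lemma exists_solution_of_forall_le [Nonempty ι] (hx : ∀ i, x i ∈ Set.Icc (0 : ℝ) 1) (hy : 0 ≤ y)
    (hyx : ∀ i, y ≤ x i) :
    ∃ b, wendlandMatrix x *ᵥ b = wendlandVec x y ∧ ∑ i, |b i| ≤ 1 := by
  obtain ⟨F, hF⟩ := Finite.exists_min x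
  obtain ⟨L, hL⟩ := Finite.exists_max x
  have hd : 0 < 2 - (x L - x F) := by linarith [(hx L).2, (hx F).1]
  set c := (x F - y) / (2 - (x L - x F))
  have hc : c * (2 - (x L - x F)) = x F - y := div_mul_cancel₀ _ hd.ne'
  have hc0 : 0 ≤ c := div_nonneg (by linarith [hyx F]) hd.le
  have hc1 : c ≤ 1 := (div_le_one hd).2 (by linarith [(hx L).2])
  refine exists_solution_of_two_nodes F L (1 - c) (-c) ?_ fun i => ?_
  · rw [abs_of_nonneg (by linarith), abs_neg, abs_of_nonneg hc0]
    linarith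
  rw [abs_of_nonneg (by linarith [hF i]), abs_of_nonpos (by linarith [hL i]),
    abs_of_nonpos (by linarith [hyx i])]
  linear_combination -hc

theorem exists_wendlandMatrix_mulVec_eq_of_mem_Icc (hx : ∀ i, x i ∈ Set.Icc (0 : ℝ) 1)
    (hy : y ∈ Set.Icc (0 : ℝ) 1) :
    ∃ b, wendlandMatrix x *ᵥ b = wendlandVec x y ∧ ∑ i, |b i| ≤ 1 := by
  cases isEmpty_or_nonempty ι
  · exact ⟨0, Subsingleton.elim _ _, by simp⟩
  by_cases hleft : ∀ i, y ≤ x i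
  · exact exists_solution_of_forall_le hx hy.1 hleft
  by_cases hright : ∀ i, x i ≤ y
  · have hx' : ∀ i, 1 - x i ∈ Set.Icc (0 : ℝ) 1 := fun i =>
      ⟨by linarith [(hx i).2], by linarith [(hx i).1]⟩
    obtain ⟨b, hb, hb1⟩ := exists_solution_of_forall_le hx' (by linarith [hy.2])
      (fun i => by linarith [hright i] : ∀ i, 1 - y ≤ 1 - x i)
    exact ⟨b, by rwa [wendlandMatrix_one_sub, wendlandVec_one_sub] at hb, hb1⟩
  push Not at hleft hright
  obtain ⟨i, hi⟩ := hleft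
  obtain ⟨j, hj⟩ := hright
  exact exists_solution_of_exists_le_of_exists_lt ⟨i, hi.le⟩ ⟨j, hj⟩

end Existence

/-- the restricted Wendland kernel `K_w(x,y) = max{1 - |x-y|, 0}` on `(0,1)`
satisfies (A4′): for pairwise distinct `x₁,…,x_m ∈ (0,1)` the matrix `[K_w(x_i,x_j)]` is
invertible, and for every `x ∈ (0,1)` the unique solution `b` of
`∑_j K_w(x_i,x_j)·b_j = K_w(x,x_i)` satisfies `∑_i |b_i| ≤ 1`. -/
theorem Kw_A4 (m : ℕ) (x : Fin m → ℝ) (hx : ∀ i, x i ∈ Set.Ioo (0 : ℝ) 1)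
    (hinj : Function.Injective x) :
    IsUnit (Matrix.of fun i j : Fin m => max (1 - |x i - x j|) 0) ∧
      ∀ y ∈ Set.Ioo (0 : ℝ) 1, ∀ b : Fin m → ℝ,
        (∀ i, ∑ j, max (1 - |x i - x j|) 0 * b j = max (1 - |y - x i|) 0) →
        ∑ i, |b i| ≤ 1 := by
  have hx' i : x i ∈ Set.Icc (0 : ℝ) 1 := Set.Ioo_subset_Icc_self (hx i)
  have hK : (Matrix.of fun i j : Fin m => max (1 - |x i - x j|) 0) = wendlandMatrix x := by
    ext i j
    exact max_eq_left (one_sub_abs_sub_nonneg (hx' i) (hx' j))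
  have hunit := isUnit_wendlandMatrix hx' hinj
  refine ⟨hK ▸ hunit, fun y hy b hb => ?_⟩
  have hy' := Set.Ioo_subset_Icc_self hy
  obtain ⟨b₀, hb₀, hb₀_le⟩ := exists_wendlandMatrix_mulVec_eq_of_mem_Icc hx' hy'
  suffices b = b₀ from this ▸ hb₀_le
  refine mulVec_injective_iff_isUnit.2 hunit (hb₀ ▸ funext fun i => ?_)
  rw [wendlandVec, ← max_eq_left (one_sub_abs_sub_nonneg hy' (hx' i)), ← hb i, ← hK]
  rfl
end

section
/- Let X be a set, G : X×X → ℂ a kernel, 𝔸 : ℬ_p → ℬ_q an invertible bounded linear operator, and x_1,…,x_m ∈ X pairwise distinct points such that the matrix M = [G(x_i,x_j)]_{i,j=1}^m is invertible. Let α_m > 0 and suppose that for every x ∈ X the vector b(x) = M^{-1}·(G(x,x_i))_{i=1}^m ∈ ℂ^m satisfies ∑_{i=1}^m |b_i(x)| ≤ α_m. Then for every x ∈ X and every c ∈ ℬ_p, the unique d ∈ ℬ_p^m solving ∑_{j=1}^m G(x_i,x_j)·𝔸(d_j) = G(x,x_i)·𝔸(c) for all i ∈ {1,…,m} satisfies ∑_{i=1}^m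 ‖d_i‖_p ≤ α_m·‖c‖_p. -/
open scoped ENNReal NNReal

/-- `ℬ_p`: the space `ℂⁿ` equipped with the `ℓ^p` norm. -/
abbrev Bsp (p : ℝ≥0∞) (n : ℕ) : Type := PiLp p (fun _ : Fin n => ℂ)

/-!
Cancelling the invertible operator `𝔸` turns the multi-task system into `M d = w ⊗ c` with
`M = [G(x_i,x_j)]` and `w = (G(x,x_i))_i`, whose only solution is `d = b ⊗ c` for the scalar
solution `b` of `M b = w`. Hence `∑ ‖d_i‖ = (∑ |b_i|) ‖c‖ ≤ α ‖c‖`.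
-/

namespace Matrix

variable {ι R M : Type*} [Fintype ι] [DecidableEq ι] [Semiring R] [AddCommMonoid M] [Module R M]

theorem eq_smul_of_sum_smul_eq {A : Matrix ι ι R} (hA : IsUnit A) {b w : ι → R}
    (hb : A *ᵥ b = w) {c : M} {d : ι → M} (hd : ∀ i, ∑ j, A i j • d j = w i • c) (i : ι) :
    d i = b i • c := by
  obtain ⟨u, rfl⟩ := hA
  calc d i = ∑ j, (↑u⁻¹ * ↑u : Matrix ι ι R) i j • d j := by
        simp [Units.inv_mul, one_apply]
    _ = ∑ k, (↑u⁻¹ : Matrix ι ι R) i k • ∑ j, (u : Matrix ι ι R) k j • d j := by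
        simp only [mul_apply, Finset.sum_smul, Finset.smul_sum, mul_smul]
        exact Finset.sum_comm
    _ = ∑ k, (↑u⁻¹ : Matrix ι ι R) i k • w k • c := by simp only [hd]
    _ = ((↑u⁻¹ : Matrix ι ι R) *ᵥ w) i • c := by
        simp only [mulVec, dotProduct, Finset.sum_smul, mul_smul]
    _ = b i • c := by rw [← hb, mulVec_mulVec, Units.inv_mul, one_mulVec]

end Matrix

theorem lebesgue_constant_GA_general (p q : ℝ≥0∞) [Fact (1 ≤ p)] (n : ℕ) {X : Type*} (G : X → X → ℂ)
    (𝔸 : Bsp p n ≃L[ℂ] Bsp q n) (m : ℕ) (x : Fin m → X)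
    (hMinv : IsUnit (Matrix.of fun i j : Fin m => G (x i) (x j)))
    (α : ℝ)
    (hG : ∀ y : X, ∀ b : Fin m → ℂ,
      (∀ i, ∑ j, G (x i) (x j) * b j = G y (x i)) → ∑ i, ‖b i‖ ≤ α) :
    ∀ y : X, ∀ c : Bsp p n, ∀ d : Fin m → Bsp p n,
      (∀ i, ∑ j, G (x i) (x j) • 𝔸 (d j) = G y (x i) • 𝔸 c) →
      ∑ i, ‖d i‖ ≤ α * ‖c‖ := by
  intro y c d hd
  obtain ⟨b, hb⟩ := Matrix.mulVec_surjective_iff_isUnit.mpr hMinv fun i => G y (x i)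
  have hd' : ∀ i, ∑ j, G (x i) (x j) • d j = G y (x i) • c := fun i =>
    𝔸.injective (by simpa only [map_sum, map_smul] using hd i)
  have hdb := Matrix.eq_smul_of_sum_smul_eq hMinv hb hd'
  calc ∑ i, ‖d i‖ = (∑ i, ‖b i‖) * ‖c‖ := by simp only [hdb, norm_smul, Finset.sum_mul]
    _ ≤ α * ‖c‖ := by
      gcongr
      exact hG y b fun i => congrFun hb i

/-- if at a point configuration `x₁,…,x_m` the scalar kernel `G` has Lebesgue
constant bounded by `α_m` (i.e. for every `x` the solution `b(x)` of
`∑_j G(x_i,x_j)·b_j = G(x,x_i)` satisfies `∑ |b_i(x)| ≤ α_m`), then for the multi-task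
kernel `𝐆 = G·𝔸` the solution `d` of `∑_j G(x_i,x_j)·𝔸(d_j) = G(x,x_i)·𝔸(c)` satisfies
`∑_i ‖d_i‖_p ≤ α_m·‖c‖_p`. -/
theorem lebesgue_constant_GA (p q : ℝ≥0∞) [Fact (1 ≤ p)] [Fact (1 ≤ q)]
    (hpq : p⁻¹ + q⁻¹ = 1) (n : ℕ) {X : Type*} (G : X → X → ℂ)
    (𝔸 : Bsp p n ≃L[ℂ] Bsp q n) (m : ℕ) (x : Fin m → X) (hinj : Function.Injective x)
    (hMinv : IsUnit (Matrix.of fun i j : Fin m => G (x i) (x j)))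
    (α : ℝ) (hα : 0 < α)
    (hG : ∀ y : X, ∀ b : Fin m → ℂ,
      (∀ i, ∑ j, G (x i) (x j) * b j = G y (x i)) → ∑ i, ‖b i‖ ≤ α) :
    ∀ y : X, ∀ c : Bsp p n, ∀ d : Fin m → Bsp p n,
      (∀ i, ∑ j, G (x i) (x j) • 𝔸 (d j) = G y (x i) • 𝔸 c) →
      ∑ i, ‖d i‖ ≤ α * ‖c‖ :=
  lebesgue_constant_GA_general p q n G 𝔸 m x hMinv α hG
end
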